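/- Let (A,μ) be a Maltsev-admissible algebra and α: A → A an algebra morphism. Then the induced Hom-algebra A_α = (A, μ_α = α∘μ, α) is Hom-Maltsev-admissible, i.e., (A, [x,y]_α = α(xy − yx), α) is a Hom-Maltsev algebra. -/
import Mathlib


variable {K A : Type*} [Field K] [CharZero K] [AddCommGroup A] [Module K A]

/-- Commutator bracket of μ. -/
def commBr (μ : A →ₗ[K] A →ₗ[K] A) (x y : A) : A := μ x y - μ y x

/-- Jacobian of the commutator bracket (no twist). -/
def commJac0 (μ : A →ₗ[K] A →ₗ[K] A) (x y z : A) : A :=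
  commBr μ (commBr μ x y) z + commBr μ (commBr μ z x) y + commBr μ (commBr μ y z) x

/-- Twisted commutator bracket [x,y]_α = α(xy − yx). -/
def commα (μ : A →ₗ[K] A →ₗ[K] A) (α : A →ₗ[K] A) (x y : A) : A := α (commBr μ x y)

/-- Hom-Jacobian of the twisted commutator bracket with twisting map α. -/
def commαJac (μ : A →ₗ[K] A →ₗ[K] A) (α : A →ₗ[K] A) (x y z : A) : A :=
  commα μ α (commα μ α x y) (α z) + commα μ α (commα μ α z x) (α y)
    + commα μ α (commα μ α y z) (α x)

theorem stmt15 (μ : A →ₗ[K] A →ₗ[K] A)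
    (hmaltsev : ∀ x y z : A,
      commJac0 μ x y (commBr μ x z) = commBr μ (commJac0 μ x y z) x)
    (α : A →ₗ[K] A)
    (hmorph : ∀ x y : A, α (μ x y) = μ (α x) (α y)) :
    (∀ x y : A, commα μ α x y = - commα μ α y x) ∧
    (∀ x y : A, α (commα μ α x y) = commα μ α (α x) (α y)) ∧
    (∀ x y z : A,
      commαJac μ α (α x) (α y) (commα μ α x z)
        = commα μ α (commαJac μ α x y z) (α (α x))) := by
  have hB : ∀ x y : A, α (commBr μ x y) = commBr μ (α x) (α y) := by
    intro x y; simp [commBr, map_sub, hmorph]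
  have hJ : ∀ x y z : A, α (commJac0 μ x y z) = commJac0 μ (α x) (α y) (α z) := by
    intro x y z; simp [commJac0, map_add, hB]
  have hJac : ∀ x y z : A, commαJac μ α x y z = α (α (commJac0 μ x y z)) := by
    intro x y z
    simp [commαJac, commα, commJac0, map_add, hB]
  refine ⟨?_, ?_, ?_⟩
  · intro x y
    simp [commα, commBr]
  · intro x y
    simp [commα, hB]
  · intro x y z
    simp only [commα]
    rw [hJac, hB, hmaltsev, hJac, ← hJ, hB]
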